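/- arXiv:1510.05492 — 11 statements merged into one kernel-verified Lean document; each statement's English description precedes it below -/
import Mathlib

section
/- Let (v_j)_{j=1,...,n} be an orthonormal basis of ℝ^n consisting of eigenvectors of XᵀX, with XᵀX v_j = α_j v_j, where α_j > 0 for 1 ≤ j ≤ k and α_j = 0 for j > k. Suppose β is an eigenvalue of B satisfying β ≠ α_j for every j = 1,...,n. Then the vector w := Σ_{j=1}^{k} γ_j v_j, where γ_j := (v_jᵀ d) / ((α_j − β)·‖d‖₂), is nonzero and satisfies B w = β w. -/
/-!
Writing `B u = β u` as `(XᵀX - β) u = ((d ⬝ᵥ u) / 2m) • d` and expanding in the eigenbasis, where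
`XᵀX - β` acts invertibly, shows that every `β`-eigenvector `u` of `B` is a nonzero multiple of
the resolvent vector `∑ j, ((v j ⬝ᵥ d) / (α j - β)) • v j`. The vector `w` is that resolvent vector
divided by `‖d‖`, because `v j ⬝ᵥ d = α j * (v j ⬝ᵥ e)` vanishes for `j ≥ k`.
-/

open Matrix Finset

variable {ι K : Type*} [Fintype ι]

theorem Matrix.sum_dotProduct_smul_of_orthonormal [DecidableEq ι] [CommRing K] {v : ι → ι → K}
    (hv : ∀ i j, v i ⬝ᵥ v j = if i = j then 1 else 0) (x : ι → K) :
    ∑ j, (v j ⬝ᵥ x) • v j = x := by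
  have hV : of v * (of v)ᵀ = 1 := by
    ext i j
    simpa [mul_apply, one_apply, dotProduct] using hv i j
  calc ∑ j, (v j ⬝ᵥ x) • v j = ((of v)ᵀ * of v) *ᵥ x := by
        rw [← mulVec_mulVec, mulVec_transpose, vecMul_eq_sum]; rfl
    _ = x := by rw [mul_eq_one_comm.mp hV, one_mulVec]

theorem Matrix.IsSymm.dotProduct_mulVec_of_mulVec_eq_smul [CommSemiring K] {A : Matrix ι ι K}
    (hA : A.IsSymm) {y : ι → K} {a : K} (hy : A *ᵥ y = a • y) (x : ι → K) :
    y ⬝ᵥ A *ᵥ x = a * (y ⬝ᵥ x) := by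
  rw [dotProduct_mulVec, ← mulVec_transpose, hA.eq, hy, smul_dotProduct, smul_eq_mul]

theorem Matrix.IsSymm.eq_smul_sum_of_mulVec_sub_smul_eq [DecidableEq ι] [Field K]
    {A : Matrix ι ι K} (hA : A.IsSymm) {v : ι → ι → K}
    (hv : ∀ i j, v i ⬝ᵥ v j = if i = j then 1 else 0)
    {α : ι → K} (heig : ∀ j, A *ᵥ v j = α j • v j) {β : K} (hβ : ∀ j, β ≠ α j)
    {u d : ι → K} {r : K} (hu : A *ᵥ u - β • u = r • d) :
    u = r • ∑ j, ((v j ⬝ᵥ d) / (α j - β)) • v j := by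
  have hcoeff : ∀ j, v j ⬝ᵥ u = r * ((v j ⬝ᵥ d) / (α j - β)) := by
    intro j
    have h := congrArg (v j ⬝ᵥ ·) hu
    simp only [dotProduct_sub, dotProduct_smul, smul_eq_mul,
      hA.dotProduct_mulVec_of_mulVec_eq_smul (heig j)] at h
    rw [mul_div_assoc', eq_div_iff (sub_ne_zero.mpr (hβ j).symm), ← h]
    ring
  conv_lhs => rw [← sum_dotProduct_smul_of_orthonormal hv u]
  simp only [hcoeff, smul_sum, smul_smul]

theorem stmt0_general {p n k : ℕ} (X : Matrix (Fin p) (Fin n) ℝ)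
    (e : Fin n → ℝ)
    (d : Fin n → ℝ) (hd : d = (Xᵀ * X).mulVec e)
    (twoM : ℝ) (htwoM : twoM = e ⬝ᵥ (Xᵀ * X).mulVec e) (hm : twoM ≠ 0)
    (B : Matrix (Fin n) (Fin n) ℝ)
    (hB : B = Xᵀ * X - twoM⁻¹ • vecMulVec d d)
    (v : Fin n → Fin n → ℝ)
    (hortho : ∀ i j : Fin n, v i ⬝ᵥ v j = if i = j then 1 else 0)
    (α : Fin n → ℝ)
    (heig : ∀ j : Fin n, (Xᵀ * X).mulVec (v j) = α j • v j)
    (hαzero : ∀ j : Fin n, k ≤ (j : ℕ) → α j = 0)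
    (β : ℝ) (hβeig : ∃ u : Fin n → ℝ, u ≠ 0 ∧ B.mulVec u = β • u)
    (hβ : ∀ j : Fin n, β ≠ α j)
    (γ : Fin n → ℝ)
    (hγ : ∀ j : Fin n, γ j = (v j ⬝ᵥ d) / ((α j - β) * Real.sqrt (d ⬝ᵥ d)))
    (w : Fin n → ℝ)
    (hw : w = ∑ j ∈ univ.filter (fun j : Fin n => (j : ℕ) < k), γ j • v j) :
    w ≠ 0 ∧ B.mulVec w = β • w := by
  obtain ⟨u, hu0, hBu⟩ := hβeig
  have hA : (Xᵀ * X).IsSymm := by rw [IsSymm, transpose_mul, transpose_transpose]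
  set r := twoM⁻¹ * (d ⬝ᵥ u)
  set s := Real.sqrt (d ⬝ᵥ d)
  set w' := ∑ j, ((v j ⬝ᵥ d) / (α j - β)) • v j
  have hu : u = r • w' := by
    refine hA.eq_smul_sum_of_mulVec_sub_smul_eq hortho heig hβ ?_
    rw [hB, sub_mulVec, smul_mulVec, vecMulVec_mulVec, op_smul_eq_smul, smul_smul] at hBu
    rw [← hBu]
    abel
  have hr : r ≠ 0 := by
    intro hr
    exact hu0 (by rw [hu, hr, zero_smul])
  have hs : s ≠ 0 := by
    have hd0 : d ≠ 0 := by
      rintro rfl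
      exact hm (by rw [htwoM, ← hd, dotProduct_zero])
    exact Real.sqrt_ne_zero'.mpr (dotProduct_self_star_pos_iff.mpr hd0)
  have hvd : ∀ j : Fin n, k ≤ (j : ℕ) → v j ⬝ᵥ d = 0 := fun j hj => by
    rw [hd, hA.dotProduct_mulVec_of_mulVec_eq_smul (heig j), hαzero j hj, zero_mul]
  have hws : w = s⁻¹ • w' := by
    rw [hw, sum_filter_of_ne fun j _ hj => ?_, smul_sum]
    · refine sum_congr rfl fun j _ => ?_
      rw [hγ j, smul_smul, mul_comm (α j - β), ← div_div, div_right_comm, div_eq_inv_mul]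
    · by_contra hjk
      exact hj (by rw [hγ j, hvd j (not_lt.mp hjk), zero_div, zero_smul])
  have hwu : w = (s⁻¹ * r⁻¹) • u := by
    rw [hws, hu, smul_smul, mul_assoc, inv_mul_cancel₀ hr, mul_one]
  refine ⟨?_, ?_⟩
  · rw [hwu]
    exact smul_ne_zero (mul_ne_zero (inv_ne_zero hs) (inv_ne_zero hr)) hu0
  · rw [hwu, mulVec_smul, hBu, smul_comm]

/-- If `(v j)` is an orthonormal basis of eigenvectors of `XᵀX` with
eigenvalues `α j` (positive for `j < k`, zero otherwise), and `β` is an eigenvalue of the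
modularity matrix `B` different from every `α j`, then
`w = ∑_{j<k} γ j • v j` with `γ j = (v jᵀ d)/((α j - β)·‖d‖₂)` is a nonzero eigenvector of
`B` with eigenvalue `β`. -/
theorem stmt0 {p n k : ℕ} (X : Matrix (Fin p) (Fin n) ℝ)
    (e : Fin n → ℝ) (he : e = fun _ => (1 : ℝ))
    (d : Fin n → ℝ) (hd : d = (Xᵀ * X).mulVec e)
    (twoM : ℝ) (htwoM : twoM = e ⬝ᵥ (Xᵀ * X).mulVec e) (hm : twoM ≠ 0)
    (B : Matrix (Fin n) (Fin n) ℝ)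
    (hB : B = Xᵀ * X - twoM⁻¹ • vecMulVec d d)
    (v : Fin n → Fin n → ℝ)
    (hortho : ∀ i j : Fin n, v i ⬝ᵥ v j = if i = j then 1 else 0)
    (α : Fin n → ℝ)
    (heig : ∀ j : Fin n, (Xᵀ * X).mulVec (v j) = α j • v j)
    (hk : k ≤ n)
    (hαpos : ∀ j : Fin n, (j : ℕ) < k → 0 < α j)
    (hαzero : ∀ j : Fin n, k ≤ (j : ℕ) → α j = 0)
    (β : ℝ) (hβeig : ∃ u : Fin n → ℝ, u ≠ 0 ∧ B.mulVec u = β • u)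
    (hβ : ∀ j : Fin n, β ≠ α j)
    (γ : Fin n → ℝ)
    (hγ : ∀ j : Fin n, γ j = (v j ⬝ᵥ d) / ((α j - β) * Real.sqrt (d ⬝ᵥ d)))
    (w : Fin n → ℝ)
    (hw : w = ∑ j ∈ univ.filter (fun j : Fin n => (j : ℕ) < k), γ j • v j) :
    w ≠ 0 ∧ B.mulVec w = β • w :=
  stmt0_general X e d hd twoM htwoM hm B hB v hortho α heig hαzero β hβeig hβ γ hγ w hw
end

section
/- Suppose β ∈ ℝ is not an eigenvalue of XᵀX and u ∈ ℝ^n is a nonzero vector with B u = β u. Then dᵀu ≠ 0 and u = (dᵀu/(2m)) · (XᵀX − β I)⁻¹ d. -/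
open Matrix

/-- If `β` is not an eigenvalue of `XᵀX` and `u ≠ 0` satisfies `B u = β u`,
then `dᵀu ≠ 0` and `u = (dᵀu/(2m)) • (XᵀX − β I)⁻¹ d`. -/
theorem stmt1 {p n : ℕ} (X : Matrix (Fin p) (Fin n) ℝ)
    (e : Fin n → ℝ) (he : e = fun _ => (1 : ℝ))
    (d : Fin n → ℝ) (hd : d = (Xᵀ * X).mulVec e)
    (twoM : ℝ) (htwoM : twoM = e ⬝ᵥ (Xᵀ * X).mulVec e) (hm : twoM ≠ 0)
    (B : Matrix (Fin n) (Fin n) ℝ)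
    (hB : B = Xᵀ * X - twoM⁻¹ • vecMulVec d d)
    (β : ℝ)
    (hβ : ∀ z : Fin n → ℝ, z ≠ 0 → (Xᵀ * X).mulVec z ≠ β • z)
    (u : Fin n → ℝ) (hu : u ≠ 0) (hBu : B.mulVec u = β • u) :
    d ⬝ᵥ u ≠ 0 ∧ u = ((d ⬝ᵥ u) / twoM) • (Xᵀ * X - β • (1 : Matrix (Fin n) (Fin n) ℝ))⁻¹.mulVec d := by
  set A := Xᵀ * X with hA
  set M := A - β • (1 : Matrix (Fin n) (Fin n) ℝ) with hM
  have hvv : (vecMulVec d d).mulVec u = (d ⬝ᵥ u) • d := by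
    funext i
    simp [mulVec, dotProduct, vecMulVec_apply, Finset.mul_sum, mul_comm, mul_left_comm]
  have hMu : M.mulVec u = ((d ⬝ᵥ u) / twoM) • d := by
    have h1 : A.mulVec u - twoM⁻¹ • ((d ⬝ᵥ u) • d) = β • u := by
      have := hBu
      rw [hB] at this
      rw [sub_mulVec, smul_mulVec, hvv] at this
      exact this
    have h2 : A.mulVec u = β • u + twoM⁻¹ • ((d ⬝ᵥ u) • d) := by
      rw [← h1]; abel
    rw [hM, sub_mulVec, smul_mulVec, one_mulVec, h2, div_eq_inv_mul,
      mul_smul]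
    abel
  have hdu : d ⬝ᵥ u ≠ 0 := by
    intro h0
    apply hβ u hu
    have : M.mulVec u = 0 := by rw [hMu, h0]; simp
    rw [hM, sub_mulVec, smul_mulVec, one_mulVec, sub_eq_zero] at this
    exact this
  have hMinj : Function.Injective M.mulVec := by
    intro a b hab
    by_contra hne
    have hz : a - b ≠ 0 := sub_ne_zero.mpr hne
    apply hβ (a - b) hz
    have : M.mulVec (a - b) = 0 := by rw [mulVec_sub, hab, sub_self]
    rw [hM, sub_mulVec, smul_mulVec, one_mulVec, sub_eq_zero] at this
    exact this
  have hMunit : IsUnit M := mulVec_injective_iff_isUnit.mp hMinj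
  refine ⟨hdu, ?_⟩
  have hinv : M⁻¹ * M = 1 := nonsing_inv_mul M ((isUnit_iff_isUnit_det M).mp hMunit)
  calc u = (M⁻¹ * M).mulVec u := by rw [hinv, one_mulVec]
    _ = M⁻¹.mulVec (M.mulVec u) := by rw [mulVec_mulVec]
    _ = ((d ⬝ᵥ u) / twoM) • M⁻¹.mulVec d := by rw [hMu, mulVec_smul]
end

section
/- If Y is the Moore–Penrose pseudoinverse of X, then the modularity matrix factors as B = (BY)(BY)ᵀ. -/
open Matrix

lemma mul_vecMulVec' {l m n : Type*} [Fintype m] (M : Matrix l m ℝ) (u : m → ℝ) (v : n → ℝ) :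
    M * vecMulVec u v = vecMulVec (M *ᵥ u) v := by
  ext i j
  simp [mul_apply, vecMulVec_apply, mulVec, dotProduct, Finset.sum_mul, mul_assoc]

lemma vecMulVec_mul' {l m n : Type*} [Fintype m] (u : l → ℝ) (v : m → ℝ) (M : Matrix m n ℝ) :
    vecMulVec u v * M = vecMulVec u (v ᵥ* M) := by
  ext i j
  simp [mul_apply, vecMulVec_apply, vecMul, dotProduct, Finset.mul_sum, mul_assoc]

lemma transpose_vecMulVec' {m n : Type*} (u : m → ℝ) (v : n → ℝ) :
    (vecMulVec u v)ᵀ = vecMulVec v u := by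
  ext i j; simp [vecMulVec_apply, mul_comm]

lemma vecMulVec_mulVec' {m n : Type*} [Fintype n] (u : m → ℝ) (v : n → ℝ) (x : n → ℝ) :
    vecMulVec u v *ᵥ x = (v ⬝ᵥ x) • u := by
  ext i
  simp [mulVec, vecMulVec_apply, dotProduct, Finset.mul_sum, Finset.sum_mul, mul_assoc,
    mul_comm, mul_left_comm]

/-- If `Y` is the Moore–Penrose pseudoinverse of `X`, then the modularity
matrix factors as `B = (BY)(BY)ᵀ`. -/
theorem stmt3 {p n : ℕ} (X : Matrix (Fin p) (Fin n) ℝ)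
    (e : Fin n → ℝ) (he : e = fun _ => (1 : ℝ))
    (d : Fin n → ℝ) (hd : d = (Xᵀ * X).mulVec e)
    (twoM : ℝ) (htwoM : twoM = e ⬝ᵥ (Xᵀ * X).mulVec e) (hm : twoM ≠ 0)
    (B : Matrix (Fin n) (Fin n) ℝ)
    (hB : B = Xᵀ * X - twoM⁻¹ • vecMulVec d d)
    (Y : Matrix (Fin n) (Fin p) ℝ)
    (hY₁ : X * Y * X = X) (hY₂ : Y * X * Y = Y)
    (hY₃ : (X * Y)ᵀ = X * Y) (hY₄ : (Y * X)ᵀ = Y * X) :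
    B = (B * Y) * (B * Y)ᵀ := by
  set w : Fin p → ℝ := X *ᵥ e with hw
  have f1 : Xᵀ *ᵥ w = d := by rw [hd, ← mulVec_mulVec]
  have f2 : w ᵥ* X = d := by rw [← f1, mulVec_transpose]
  have f3 : w ⬝ᵥ w = twoM := by
    rw [htwoM]
    conv_rhs => rw [← Matrix.mulVec_mulVec, dotProduct_comm,
      Matrix.mulVec_transpose, ← Matrix.dotProduct_mulVec]
  set C : Matrix (Fin p) (Fin n) ℝ := X - twoM⁻¹ • vecMulVec w d with hC
  have hXC : Xᵀ * C = B := by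
    rw [hC, Matrix.mul_sub, Matrix.mul_smul, mul_vecMulVec', f1, hB]
  have hCt : Cᵀ = Xᵀ - twoM⁻¹ • vecMulVec d w := by
    rw [hC, transpose_sub, transpose_smul, transpose_vecMulVec']
  have hCX : Cᵀ * X = B := by
    rw [hCt, Matrix.sub_mul, Matrix.smul_mul, vecMulVec_mul', f2, hB]
  have hCw : Cᵀ *ᵥ w = 0 := by
    rw [hCt, sub_mulVec, smul_mulVec, f1, vecMulVec_mulVec', f3,
      smul_smul, inv_mul_cancel₀ hm, one_smul, sub_self]
  have hCC : Cᵀ * C = B := by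
    rw [hC, Matrix.mul_sub, Matrix.mul_smul, mul_vecMulVec', hCw, hCX]
    ext i j
    simp [vecMulVec_apply]
  have hXYw : (X * Y) *ᵥ w = w := by
    rw [hw, mulVec_mulVec, hY₁]
  have hXYC : X * Y * C = C := by
    rw [hC, Matrix.mul_sub, hY₁, Matrix.mul_smul, mul_vecMulVec', hXYw]
  have hBsym : Bᵀ = B := by
    rw [hB, transpose_sub, transpose_smul, transpose_mul, transpose_transpose,
      transpose_vecMulVec']
  have key : (B * Y) * (B * Y)ᵀ = B := by
    calc (B * Y) * (B * Y)ᵀ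
        = B * (Y * (Yᵀ * B)) := by
          rw [transpose_mul, hBsym]; simp only [Matrix.mul_assoc]
      _ = B * (Y * (Yᵀ * (Xᵀ * C))) := by rw [hXC]
      _ = B * (Y * ((X * Y)ᵀ * C)) := by
          rw [transpose_mul]; simp only [Matrix.mul_assoc]
      _ = B * ((Y * (X * Y)) * C) := by
          rw [hY₃]; simp only [Matrix.mul_assoc]
      _ = B * (Y * C) := by rw [← Matrix.mul_assoc Y X Y, hY₂]
      _ = (Cᵀ * X) * (Y * C) := by rw [hCX]
      _ = Cᵀ * (X * Y * C) := by simp only [Matrix.mul_assoc]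
      _ = B := by rw [hXYC, hCC]
  exact key.symm
end

section
/- Let Y be the Moore–Penrose pseudoinverse of X. If b_i and b_j are eigenvectors of B with eigenvalues λ_i and λ_j respectively, where λ_i ≠ λ_j and both λ_i ≠ 0 and λ_j ≠ 0, then the vectors m_i := Yᵀ b_i and m_j := Yᵀ b_j are orthogonal: m_iᵀ m_j = 0. -/
open Matrix

lemma vecMulVec_mulVec'_s4 {n : ℕ} (w v x : Fin n → ℝ) :
    (vecMulVec w v).mulVec x = (v ⬝ᵥ x) • w := by
  ext i
  simp [vecMulVec_apply, mulVec, dotProduct, Finset.mul_sum, Finset.sum_mul,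
    mul_comm, mul_left_comm]

/-- If `Y` is the Moore–Penrose pseudoinverse of `X` and `b i`, `b j` are
eigenvectors of the modularity matrix `B` with distinct nonzero eigenvalues `λ i ≠ λ j`,
then `m i := Yᵀ b i` and `m j := Yᵀ b j` are orthogonal. -/
theorem stmt4 {p n : ℕ} (X : Matrix (Fin p) (Fin n) ℝ)
    (e : Fin n → ℝ) (he : e = fun _ => (1 : ℝ))
    (d : Fin n → ℝ) (hd : d = (Xᵀ * X).mulVec e)
    (twoM : ℝ) (htwoM : twoM = e ⬝ᵥ (Xᵀ * X).mulVec e) (hm : twoM ≠ 0)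
    (B : Matrix (Fin n) (Fin n) ℝ)
    (hB : B = Xᵀ * X - twoM⁻¹ • vecMulVec d d)
    (Y : Matrix (Fin n) (Fin p) ℝ)
    (hY₁ : X * Y * X = X) (hY₂ : Y * X * Y = Y)
    (hY₃ : (X * Y)ᵀ = X * Y) (hY₄ : (Y * X)ᵀ = Y * X)
    (bi bj : Fin n → ℝ) (hbi : bi ≠ 0) (hbj : bj ≠ 0)
    (lami lamj : ℝ)
    (hBi : B.mulVec bi = lami • bi) (hBj : B.mulVec bj = lamj • bj)
    (hne : lami ≠ lamj) (hi : lami ≠ 0) (hj : lamj ≠ 0) :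
    Yᵀ.mulVec bi ⬝ᵥ Yᵀ.mulVec bj = 0 := by
  -- B is symmetric
  have hBsymm : Bᵀ = B := by
    rw [hB]
    ext i k
    simp [transpose_apply, vecMulVec_apply, mul_apply, mul_comm]
  -- d ⬝ᵥ e = twoM
  have hde : d ⬝ᵥ e = twoM := by
    rw [hd, htwoM, dotProduct_comm]
  -- B e = 0
  have hBe : B.mulVec e = 0 := by
    rw [hB, sub_mulVec, smul_mulVec, vecMulVec_mulVec'_s4, hde, ← hd]
    simp [smul_smul, inv_mul_cancel₀ hm]
  -- e ⬝ᵥ bi = 0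
  have hei : e ⬝ᵥ bi = 0 := by
    have h1 : e ⬝ᵥ B.mulVec bi = lami * (e ⬝ᵥ bi) := by
      rw [hBi, dotProduct_smul]; rfl
    have h2 : e ⬝ᵥ B.mulVec bi = 0 := by
      rw [dotProduct_mulVec, ← mulVec_transpose, hBsymm, hBe]
      simp
    have := h1.symm.trans h2
    exact (mul_eq_zero.mp this).resolve_left hi
  -- bi ⬝ᵥ bj = 0
  have hortho : bi ⬝ᵥ bj = 0 := by
    have h1 : bi ⬝ᵥ B.mulVec bj = lamj * (bi ⬝ᵥ bj) := by
      rw [hBj, dotProduct_smul]; rfl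
    have h2 : bi ⬝ᵥ B.mulVec bj = lami * (bi ⬝ᵥ bj) := by
      rw [dotProduct_mulVec, ← mulVec_transpose, hBsymm, hBi, smul_dotProduct]; rfl
    have := sub_eq_zero.mpr (h2.symm.trans h1)
    rw [← sub_mul] at this
    exact (mul_eq_zero.mp this).resolve_left (sub_ne_zero.mpr hne)
  -- key decomposition
  set ci : Fin n → ℝ := bi - (twoM⁻¹ * (d ⬝ᵥ bi)) • e with hci
  set cj : Fin n → ℝ := bj - (twoM⁻¹ * (d ⬝ᵥ bj)) • e with hcj
  have hXXc : ∀ (b : Fin n → ℝ) (lam : ℝ), B.mulVec b = lam • b →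
      (Xᵀ * X).mulVec (b - (twoM⁻¹ * (d ⬝ᵥ b)) • e) = lam • b := by
    intro b lam hb
    rw [mulVec_sub, mulVec_smul, ← hd, ← hb, hB, sub_mulVec, smul_mulVec,
      vecMulVec_mulVec'_s4, smul_smul]
  have hXXci : (Xᵀ * X).mulVec ci = lami • bi := hXXc bi lami hBi
  have hXXcj : (Xᵀ * X).mulVec cj = lamj • bj := hXXc bj lamj hBj
  -- Yᵀ bi = lami⁻¹ • X ci
  have hYX : Yᵀ * Xᵀ = X * Y := by rw [← transpose_mul, hY₃]
  have hm_eq : ∀ (b c : Fin n → ℝ) (lam : ℝ), lam ≠ 0 →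
      (Xᵀ * X).mulVec c = lam • b → Yᵀ.mulVec b = lam⁻¹ • X.mulVec c := by
    intro b c lam hlam hc
    have : Yᵀ.mulVec ((Xᵀ * X).mulVec c) = X.mulVec c := by
      rw [mulVec_mulVec, ← Matrix.mul_assoc, hYX, hY₁]
    rw [hc, mulVec_smul] at this
    have := congrArg (lam⁻¹ • ·) this
    simpa [smul_smul, inv_mul_cancel₀ hlam] using this
  have hmi : Yᵀ.mulVec bi = lami⁻¹ • X.mulVec ci := hm_eq bi ci lami hi hXXci
  have hmj : Yᵀ.mulVec bj = lamj⁻¹ • X.mulVec cj := hm_eq bj cj lamj hj hXXcj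
  rw [hmi, hmj, smul_dotProduct, dotProduct_smul]
  have hbe : bi ⬝ᵥ e = 0 := by rw [dotProduct_comm]; exact hei
  have : X.mulVec ci ⬝ᵥ X.mulVec cj = 0 := by
    rw [dotProduct_mulVec, ← mulVec_transpose, mulVec_mulVec, hXXci, smul_dotProduct]
    simp [hcj, dotProduct_sub, dotProduct_smul, hortho, hbe]
  rw [this]
  simp
end

section
/- Let Y be the Moore–Penrose pseudoinverse of X, and let b ∈ ℝ^n be a nonzero vector with B b = β b for some β ≠ 0. Set m := Yᵀ b and c := m/‖m‖₂. Then m ≠ 0, and the projection of X onto the span of c satisfies (c cᵀ) X = (1/‖m‖₂) · c bᵀ, where c cᵀ and c bᵀ denote outer products. -/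
open Matrix

/-- If `Y` is the Moore–Penrose pseudoinverse of `X` and `b ≠ 0` satisfies
`B b = β b` with `β ≠ 0`, then `m := Yᵀ b` is nonzero, and with `c := m/‖m‖₂` the
projection of `X` onto the span of `c` satisfies `(c cᵀ) X = (1/‖m‖₂) · c bᵀ`. -/
theorem stmt5 {p n : ℕ} (X : Matrix (Fin p) (Fin n) ℝ)
    (e : Fin n → ℝ) (he : e = fun _ => (1 : ℝ))
    (d : Fin n → ℝ) (hd : d = (Xᵀ * X).mulVec e)
    (twoM : ℝ) (htwoM : twoM = e ⬝ᵥ (Xᵀ * X).mulVec e) (hm : twoM ≠ 0)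
    (B : Matrix (Fin n) (Fin n) ℝ)
    (hB : B = Xᵀ * X - twoM⁻¹ • vecMulVec d d)
    (Y : Matrix (Fin n) (Fin p) ℝ)
    (hY₁ : X * Y * X = X) (hY₂ : Y * X * Y = Y)
    (hY₃ : (X * Y)ᵀ = X * Y) (hY₄ : (Y * X)ᵀ = Y * X)
    (b : Fin n → ℝ) (hb : b ≠ 0)
    (β : ℝ) (hβ : β ≠ 0) (hBb : B.mulVec b = β • b)
    (m : Fin p → ℝ) (hmdef : m = Yᵀ.mulVec b)
    (c : Fin p → ℝ) (hc : c = (Real.sqrt (m ⬝ᵥ m))⁻¹ • m) :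
    m ≠ 0 ∧ vecMulVec c c * X = (Real.sqrt (m ⬝ᵥ m))⁻¹ • vecMulVec c b := by
  -- b is in the range of Xᵀ
  have hdd : (vecMulVec d d).mulVec b = (d ⬝ᵥ b) • d := by
    funext i
    simp [Matrix.mulVec, vecMulVec, dotProduct, Finset.mul_sum, mul_comm, mul_assoc,
      mul_left_comm]
  have hXu : Xᵀ.mulVec (β⁻¹ • (X.mulVec (b - (twoM⁻¹ * (d ⬝ᵥ b)) • e))) = b := by
    have h1 : (Xᵀ * X).mulVec (b - (twoM⁻¹ * (d ⬝ᵥ b)) • e) = β • b := by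
      rw [Matrix.mulVec_sub, Matrix.mulVec_smul, ← hd, ← hBb, hB, Matrix.sub_mulVec,
        Matrix.smul_mulVec, hdd]
      rw [smul_smul]
    rw [Matrix.mulVec_smul, Matrix.mulVec_mulVec, h1, smul_smul, inv_mul_cancel₀ hβ,
      one_smul]
  -- Y*X fixes vectors in the range of Xᵀ
  have hYXXt : (Y * X) * Xᵀ = Xᵀ := by
    calc (Y * X) * Xᵀ = (Y * X)ᵀ * Xᵀ := by rw [hY₄]
    _ = (X * (Y * X))ᵀ := (Matrix.transpose_mul X (Y * X)).symm
    _ = Xᵀ := by rw [← Matrix.mul_assoc, hY₁]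
  have hbfix : (Y * X).mulVec b = b := by
    conv_lhs => rw [← hXu]
    rw [Matrix.mulVec_mulVec, hYXXt, hXu]
  have hbm : Xᵀ.mulVec m = b := by
    rw [hmdef, Matrix.mulVec_mulVec, ← Matrix.transpose_mul, hY₄, hbfix]
  have hmne : m ≠ 0 := by
    intro h
    apply hb
    rw [← hbm, h, Matrix.mulVec_zero]
  refine ⟨hmne, ?_⟩
  have hXc : Xᵀ.mulVec c = (Real.sqrt (m ⬝ᵥ m))⁻¹ • b := by
    rw [hc, Matrix.mulVec_smul, hbm]
  funext i j
  have hbj : ∑ k, c k * X k j = (Real.sqrt (m ⬝ᵥ m))⁻¹ * b j := by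
    have := congrFun hXc j
    simpa [Matrix.mulVec, dotProduct, mul_comm] using this
  simp only [Matrix.mul_apply, vecMulVec_apply, Matrix.smul_apply, smul_eq_mul]
  calc ∑ k, c i * c k * X k j = c i * ∑ k, c k * X k j := by
        rw [Finset.mul_sum]; simp [mul_assoc]
  _ = (Real.sqrt (m ⬝ᵥ m))⁻¹ * (c i * b j) := by rw [hbj]; ring
end

section
/- Let Y be the Moore–Penrose pseudoinverse of X, and let b ∈ ℝ^n with ‖b‖₂ = 1 and B b = β b for some β ≠ 0. Then β · ‖Yᵀ b‖₂² = 1; in particular β > 0. -/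
/-!
With `G = XᵀX` and `d = G e`, the modularity matrix `B = G - (eᵀGe)⁻¹ ddᵀ` satisfies `eᵀB = 0`,
so an eigenvector `b` for a nonzero eigenvalue is orthogonal to `e`. Moreover
`B = XᵀX C` with `C = 1 - (eᵀGe)⁻¹ edᵀ`, so `b = β⁻¹ B b` lies in the range of `Xᵀ`, on which the
projector `Y X` is the identity. Hence
`β ‖Yᵀb‖² = ⟨Yᵀ B b, Yᵀ b⟩ = ⟨X C b, Yᵀ b⟩ = ⟨C b, Y X b⟩ = ‖b‖² - (eᵀGe)⁻¹ (dᵀb) (eᵀb) = 1`.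
-/

open Matrix

section Pseudoinverse

variable {R : Type*} [CommRing R] {m n : Type*} [Fintype m] {X : Matrix m n R} {Y : Matrix n m R}

theorem transpose_pinv_mul_gram [Fintype n] (h₁ : X * Y * X = X) (h₃ : (X * Y)ᵀ = X * Y) :
    Yᵀ * (Xᵀ * X) = X := by
  rw [← Matrix.mul_assoc, ← transpose_mul, h₃, h₁]

theorem pinv_mul_mul_transpose [Fintype n] (h₁ : X * Y * X = X) (h₄ : (Y * X)ᵀ = Y * X) :
    Y * X * Xᵀ = Xᵀ := by
  rw [← h₄, ← transpose_mul, ← Matrix.mul_assoc, h₁]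

theorem transpose_mul_transpose_pinv (h₄ : (Y * X)ᵀ = Y * X) : Xᵀ * Yᵀ = Y * X := by
  rw [← transpose_mul, h₄]

end Pseudoinverse

theorem smul_dotProduct_transpose_pinv_mulVec {K : Type*} [Field K] {m n : Type*} [Fintype m]
    [Fintype n] {X : Matrix m n K} {Y : Matrix n m K} (h₁ : X * Y * X = X)
    (h₃ : (X * Y)ᵀ = X * Y) (h₄ : (Y * X)ᵀ = Y * X) (C : Matrix n n K) {b : n → K} {β : K}
    (hβ : β ≠ 0) (hb : (Xᵀ * X * C) *ᵥ b = β • b) :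
    β * (Yᵀ *ᵥ b ⬝ᵥ Yᵀ *ᵥ b) = C *ᵥ b ⬝ᵥ b := by
  have hb_range : b = Xᵀ *ᵥ (β⁻¹ • (X * C) *ᵥ b) := by
    rw [mulVec_smul, mulVec_mulVec, ← Matrix.mul_assoc, hb, smul_smul, inv_mul_cancel₀ hβ,
      one_smul]
  have hfix : (Y * X) *ᵥ b = b := by
    rw [hb_range, mulVec_mulVec, pinv_mul_mul_transpose h₁ h₄]
  calc β * (Yᵀ *ᵥ b ⬝ᵥ Yᵀ *ᵥ b) = Yᵀ *ᵥ (β • b) ⬝ᵥ Yᵀ *ᵥ b := by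
        rw [mulVec_smul, smul_dotProduct, smul_eq_mul]
    _ = X *ᵥ (C *ᵥ b) ⬝ᵥ Yᵀ *ᵥ b := by
        rw [← hb, mulVec_mulVec, ← Matrix.mul_assoc, transpose_pinv_mul_gram h₁ h₃, mulVec_mulVec]
    _ = C *ᵥ b ⬝ᵥ (Xᵀ * Yᵀ) *ᵥ b := by
        rw [dotProduct_comm, dotProduct_mulVec, ← mulVec_transpose, dotProduct_comm, mulVec_mulVec]
    _ = C *ᵥ b ⬝ᵥ b := by
        rw [transpose_mul_transpose_pinv h₄, hfix]

section Modularity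

variable {K : Type*} [Field K] {n : Type*} [Fintype n]

def modularityMatrix (G : Matrix n n K) (e : n → K) : Matrix n n K :=
  G - (e ⬝ᵥ G *ᵥ e)⁻¹ • vecMulVec (G *ᵥ e) (G *ᵥ e)

theorem modularityMatrix_eq_mul [DecidableEq n] (G : Matrix n n K) (e : n → K) :
    modularityMatrix G e = G * (1 - (e ⬝ᵥ G *ᵥ e)⁻¹ • vecMulVec e (G *ᵥ e)) := by
  rw [modularityMatrix, Matrix.mul_sub, Matrix.mul_one, Matrix.mul_smul, mul_vecMulVec]

theorem dotProduct_modularityMatrix_mulVec {G : Matrix n n K} (hG : Gᵀ = G) {e : n → K}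
    (he : e ⬝ᵥ G *ᵥ e ≠ 0) (b : n → K) : e ⬝ᵥ modularityMatrix G e *ᵥ b = 0 := by
  have hGe : e ⬝ᵥ G *ᵥ b = G *ᵥ e ⬝ᵥ b := by
    rw [dotProduct_mulVec, ← mulVec_transpose, hG]
  rw [modularityMatrix, sub_mulVec, smul_mulVec, vecMulVec_mulVec, op_smul_eq_smul,
    dotProduct_sub, dotProduct_smul, dotProduct_smul, hGe, smul_eq_mul, smul_eq_mul]
  field_simp
  ring

theorem one_sub_smul_vecMulVec_mulVec_dotProduct [DecidableEq n] (c : K) (e d b : n → K) :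
    (1 - c • vecMulVec e d) *ᵥ b ⬝ᵥ b = b ⬝ᵥ b - c * (d ⬝ᵥ b) * (e ⬝ᵥ b) := by
  rw [sub_mulVec, one_mulVec, smul_mulVec, vecMulVec_mulVec, op_smul_eq_smul, sub_dotProduct,
    smul_dotProduct, smul_dotProduct, smul_eq_mul, smul_eq_mul, dotProduct_comm e b, mul_assoc]

end Modularity

theorem stmt6_general {p n : ℕ} (X : Matrix (Fin p) (Fin n) ℝ)
    (e : Fin n → ℝ)
    (d : Fin n → ℝ) (hd : d = (Xᵀ * X).mulVec e)
    (twoM : ℝ) (htwoM : twoM = e ⬝ᵥ (Xᵀ * X).mulVec e) (hm : twoM ≠ 0)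
    (B : Matrix (Fin n) (Fin n) ℝ)
    (hB : B = Xᵀ * X - twoM⁻¹ • vecMulVec d d)
    (Y : Matrix (Fin n) (Fin p) ℝ)
    (hY₁ : X * Y * X = X)
    (hY₃ : (X * Y)ᵀ = X * Y) (hY₄ : (Y * X)ᵀ = Y * X)
    (b : Fin n → ℝ) (hb : Real.sqrt (b ⬝ᵥ b) = 1)
    (β : ℝ) (hβ : β ≠ 0) (hBb : B.mulVec b = β • b) :
    β * (Yᵀ.mulVec b ⬝ᵥ Yᵀ.mulVec b) = 1 ∧ 0 < β := by
  subst hd htwoM hB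
  replace hBb : modularityMatrix (Xᵀ * X) e *ᵥ b = β • b := hBb
  have hgram : (Xᵀ * X)ᵀ = Xᵀ * X := by rw [transpose_mul, transpose_transpose]
  have heb : e ⬝ᵥ b = 0 := by
    have h := dotProduct_modularityMatrix_mulVec hgram hm b
    rw [hBb, dotProduct_smul, smul_eq_mul] at h
    exact (mul_eq_zero.mp h).resolve_left hβ
  rw [modularityMatrix_eq_mul] at hBb
  have hnorm := smul_dotProduct_transpose_pinv_mulVec hY₁ hY₃ hY₄ _ hβ hBb
  rw [one_sub_smul_vecMulVec_mulVec_dotProduct, heb, Real.sqrt_eq_one.mp hb, mul_zero,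
    sub_zero] at hnorm
  have hsq : 0 ≤ Yᵀ *ᵥ b ⬝ᵥ Yᵀ *ᵥ b := Fintype.sum_nonneg fun _ => mul_self_nonneg _
  exact ⟨hnorm, pos_of_mul_pos_left (hnorm ▸ one_pos) hsq⟩

/-- If `Y` is the Moore–Penrose pseudoinverse of `X` and `b` is a unit
vector with `B b = β b` for some `β ≠ 0`, then `β · ‖Yᵀ b‖₂² = 1`; in particular `β > 0`. -/
theorem stmt6 {p n : ℕ} (X : Matrix (Fin p) (Fin n) ℝ)
    (e : Fin n → ℝ) (he : e = fun _ => (1 : ℝ))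
    (d : Fin n → ℝ) (hd : d = (Xᵀ * X).mulVec e)
    (twoM : ℝ) (htwoM : twoM = e ⬝ᵥ (Xᵀ * X).mulVec e) (hm : twoM ≠ 0)
    (B : Matrix (Fin n) (Fin n) ℝ)
    (hB : B = Xᵀ * X - twoM⁻¹ • vecMulVec d d)
    (Y : Matrix (Fin n) (Fin p) ℝ)
    (hY₁ : X * Y * X = X) (hY₂ : Y * X * Y = Y)
    (hY₃ : (X * Y)ᵀ = X * Y) (hY₄ : (Y * X)ᵀ = Y * X)
    (b : Fin n → ℝ) (hb : Real.sqrt (b ⬝ᵥ b) = 1)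
    (β : ℝ) (hβ : β ≠ 0) (hBb : B.mulVec b = β • b) :
    β * (Yᵀ.mulVec b ⬝ᵥ Yᵀ.mulVec b) = 1 ∧ 0 < β :=
  stmt6_general X e d hd twoM htwoM hm B hB Y hY₁ hY₃ hY₄ b hb β hβ hBb
end

section
/- Let Y be the Moore–Penrose pseudoinverse of X, and let b_1,...,b_r be orthonormal vectors in ℝ^n with B b_j = β_j b_j and β_j ≠ 0 for each j. Set m_j := Yᵀ b_j, c_j := m_j/‖m_j‖₂, and X' := (I − Σ_{j=1}^{r} c_j c_jᵀ) X. Define d' := X'ᵀX' e and 2m' := eᵀ X'ᵀX' e. Then 2m' = 2m (in particular 2m' ≠ 0) and the modularity matrix of the deflated data, B' := X'ᵀX' − (1/(2m')) d' d'ᵀ, equals B − Σ_{j=1}^{r} β_j b_j b_jᵀ. -/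
open Matrix

lemma helper_mul_vecMulVec {k l q : Type*} [Fintype l] (A : Matrix k l ℝ) (u : l → ℝ) (v : q → ℝ) :
    A * vecMulVec u v = vecMulVec (A *ᵥ u) v := by
  ext i j
  simp only [Matrix.mul_apply, vecMulVec_apply, Matrix.mulVec, dotProduct]
  rw [Finset.sum_mul]
  exact Finset.sum_congr rfl fun x _ => by ring

lemma helper_vecMulVec_mul {k l q : Type*} [Fintype l] (u : k → ℝ) (v : l → ℝ) (A : Matrix l q ℝ) :
    vecMulVec u v * A = vecMulVec u (Aᵀ *ᵥ v) := by
  ext i j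
  simp only [Matrix.mul_apply, vecMulVec_apply, Matrix.mulVec, dotProduct, Matrix.transpose_apply]
  rw [Finset.mul_sum]
  exact Finset.sum_congr rfl fun x _ => by ring

lemma helper_vecMulVec_mulVec {k l : Type*} [Fintype l] (u : k → ℝ) (v w : l → ℝ) :
    (vecMulVec u v) *ᵥ w = (v ⬝ᵥ w) • u := by
  ext i
  simp only [Matrix.mulVec, vecMulVec_apply, dotProduct, Pi.smul_apply, smul_eq_mul]
  rw [Finset.sum_mul]
  exact Finset.sum_congr rfl fun x _ => by ring

lemma helper_vecMulVec_transpose {k q : Type*} (u : k → ℝ) (v : q → ℝ) :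
    (vecMulVec u v)ᵀ = vecMulVec v u := by
  ext i j; simp [vecMulVec_apply, mul_comm]

lemma helper_vecMulVec_mul_vecMulVec {k l q : Type*} [Fintype l]
    (u : k → ℝ) (v w : l → ℝ) (z : q → ℝ) :
    vecMulVec u v * vecMulVec w z = (v ⬝ᵥ w) • vecMulVec u z := by
  ext i j
  simp only [Matrix.mul_apply, vecMulVec_apply, dotProduct, Pi.smul_apply,
    Matrix.smul_apply, smul_eq_mul]
  rw [Finset.sum_mul]
  exact Finset.sum_congr rfl fun x _ => by ring

lemma helper_smul_vecMulVec {k q : Type*} (a a' : ℝ) (u : k → ℝ) (v : q → ℝ) :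
    vecMulVec (a • u) (a' • v) = (a * a') • vecMulVec u v := by
  ext i j
  simp only [vecMulVec_apply, Pi.smul_apply, Matrix.smul_apply, smul_eq_mul]
  ring

lemma helper_sum_mulVec {k l ι : Type*} [Fintype l] (s : Finset ι)
    (M : ι → Matrix k l ℝ) (v : l → ℝ) :
    (∑ j ∈ s, M j) *ᵥ v = ∑ j ∈ s, (M j) *ᵥ v := by
  ext i
  simp only [Matrix.mulVec, dotProduct, Finset.sum_apply, Matrix.sum_apply, Finset.sum_mul]
  exact Finset.sum_comm

lemma helper_dot_symm {k : Type*} [Fintype k] (A : Matrix k k ℝ) (hA : Aᵀ = A)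
    (x y : k → ℝ) : x ⬝ᵥ (A *ᵥ y) = (A *ᵥ x) ⬝ᵥ y := by
  rw [dotProduct_mulVec, ← vecMul_transpose, hA]

/-- With the deflated data matrix `X' := (I − ∑ c_j c_jᵀ) X` built from
orthonormal eigenvectors `b j` of `B` with nonzero eigenvalues `β j`, setting
`d' := X'ᵀX' e` and `2m' := eᵀ X'ᵀX' e`, one has `2m' = 2m` and the deflated modularity
matrix `B' := X'ᵀX' − (1/(2m')) d' d'ᵀ` equals `B − ∑ β_j b_j b_jᵀ`. -/
theorem stmt11 {p n r : ℕ} (X : Matrix (Fin p) (Fin n) ℝ)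
    (e : Fin n → ℝ) (he : e = fun _ => (1 : ℝ))
    (d : Fin n → ℝ) (hd : d = (Xᵀ * X).mulVec e)
    (twoM : ℝ) (htwoM : twoM = e ⬝ᵥ (Xᵀ * X).mulVec e) (hm : twoM ≠ 0)
    (B : Matrix (Fin n) (Fin n) ℝ)
    (hB : B = Xᵀ * X - twoM⁻¹ • vecMulVec d d)
    (Y : Matrix (Fin n) (Fin p) ℝ)
    (hY₁ : X * Y * X = X) (hY₂ : Y * X * Y = Y)
    (hY₃ : (X * Y)ᵀ = X * Y) (hY₄ : (Y * X)ᵀ = Y * X)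
    (b : Fin r → Fin n → ℝ)
    (hortho : ∀ i j : Fin r, b i ⬝ᵥ b j = if i = j then 1 else 0)
    (β : Fin r → ℝ) (hβ : ∀ j : Fin r, β j ≠ 0)
    (heig : ∀ j : Fin r, B.mulVec (b j) = β j • b j)
    (m : Fin r → Fin p → ℝ) (hmdef : ∀ j : Fin r, m j = Yᵀ.mulVec (b j))
    (c : Fin r → Fin p → ℝ)
    (hc : ∀ j : Fin r, c j = (Real.sqrt (m j ⬝ᵥ m j))⁻¹ • m j)
    (X' : Matrix (Fin p) (Fin n) ℝ)
    (hX' : X' = (1 - ∑ j : Fin r, vecMulVec (c j) (c j)) * X)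
    (d' : Fin n → ℝ) (hd' : d' = (X'ᵀ * X').mulVec e)
    (twoM' : ℝ) (htwoM' : twoM' = e ⬝ᵥ (X'ᵀ * X').mulVec e)
    (B' : Matrix (Fin n) (Fin n) ℝ)
    (hB' : B' = X'ᵀ * X' - twoM'⁻¹ • vecMulVec d' d') :
    twoM' = twoM ∧ B' = B - ∑ j : Fin r, β j • vecMulVec (b j) (b j) := by
  -- basic pseudoinverse consequences
  have hXtYt : Xᵀ * Yᵀ = Y * X := by rw [← Matrix.transpose_mul, hY₄]
  have hYXXt : (Y * X) * Xᵀ = Xᵀ := by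
    calc (Y * X) * Xᵀ = (Y * X)ᵀ * Xᵀ := by rw [hY₄]
      _ = (X * (Y * X))ᵀ := (Matrix.transpose_mul X (Y * X)).symm
      _ = Xᵀ := by rw [← Matrix.mul_assoc, hY₁]
  have hYXXtX : (Y * X) * (Xᵀ * X) = Xᵀ * X := by
    rw [← Matrix.mul_assoc, hYXXt]
  have hYXd : (Y * X) *ᵥ d = d := by
    rw [hd, Matrix.mulVec_mulVec, hYXXtX]
  have hYXB : (Y * X) * B = B := by
    rw [hB, Matrix.mul_sub, hYXXtX, Matrix.mul_smul, helper_mul_vecMulVec, hYXd]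
  have hYXb : ∀ j, (Y * X) *ᵥ b j = b j := by
    intro j
    have h1 : (Y * X) *ᵥ (B *ᵥ b j) = B *ᵥ b j := by
      rw [Matrix.mulVec_mulVec, hYXB]
    rw [heig j, Matrix.mulVec_smul] at h1
    exact smul_right_injective _ (hβ j) h1
  have hXtXsymm : (Xᵀ * X)ᵀ = Xᵀ * X := by
    rw [Matrix.transpose_mul, Matrix.transpose_transpose]
  have hBsymm : Bᵀ = B := by
    rw [hB, Matrix.transpose_sub, Matrix.transpose_smul, helper_vecMulVec_transpose, hXtXsymm]
  have hed : e ⬝ᵥ d = twoM := by rw [htwoM, hd]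
  have hde : d ⬝ᵥ e = twoM := by rw [dotProduct_comm, hed]
  have hBe : B *ᵥ e = 0 := by
    rw [hB, Matrix.sub_mulVec, Matrix.smul_mulVec, helper_vecMulVec_mulVec, hde, ← hd,
      smul_smul, inv_mul_cancel₀ hm, one_smul, sub_self]
  have heb : ∀ j, e ⬝ᵥ b j = 0 := by
    intro j
    have h1 : e ⬝ᵥ (B *ᵥ b j) = 0 := by
      rw [helper_dot_symm B hBsymm, hBe, zero_dotProduct]
    rw [heig j, dotProduct_smul, smul_eq_mul] at h1
    exact (mul_eq_zero.mp h1).resolve_left (hβ j)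
  have hbe : ∀ j, b j ⬝ᵥ e = 0 := fun j => by rw [dotProduct_comm]; exact heb j
  -- the auxiliary vectors u j
  set u : Fin r → Fin n → ℝ := fun j => (Y * Yᵀ) *ᵥ b j with hu
  have hXtXYYt : (Xᵀ * X) * (Y * Yᵀ) = Y * X := by
    calc Xᵀ * X * (Y * Yᵀ) = Xᵀ * (X * Y * Yᵀ) := by
          rw [Matrix.mul_assoc, Matrix.mul_assoc]
      _ = Xᵀ * ((X * Y)ᵀ * Yᵀ) := by rw [hY₃]
      _ = Xᵀ * (Yᵀ * (Xᵀ * Yᵀ)) := by rw [Matrix.transpose_mul, Matrix.mul_assoc]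
      _ = (Xᵀ * Yᵀ) * (Xᵀ * Yᵀ) := by rw [← Matrix.mul_assoc]
      _ = (Y * X) * (Y * X) := by rw [hXtYt]
      _ = Y * X := by rw [← Matrix.mul_assoc, hY₂]
  have hXtXu : ∀ j, (Xᵀ * X) *ᵥ u j = b j := by
    intro j
    rw [hu]
    show (Xᵀ * X) *ᵥ ((Y * Yᵀ) *ᵥ b j) = b j
    rw [Matrix.mulVec_mulVec, hXtXYYt, hYXb]
  have hmm' : ∀ i j, m i ⬝ᵥ m j = b i ⬝ᵥ u j := by
    intro i j
    rw [hmdef i, hmdef j, Matrix.mulVec_transpose, ← Matrix.dotProduct_mulVec,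
      Matrix.mulVec_mulVec]
  have hdu : ∀ j, d ⬝ᵥ u j = 0 := by
    intro j
    rw [hd, dotProduct_comm, helper_dot_symm _ hXtXsymm, hXtXu, hbe]
  have hBu : ∀ j, B *ᵥ u j = b j := by
    intro j
    rw [hB, Matrix.sub_mulVec, Matrix.smul_mulVec, helper_vecMulVec_mulVec, hdu,
      hXtXu, zero_smul, smul_zero, sub_zero]
  have hbu : ∀ i j, b i ⬝ᵥ u j = if i = j then (β i)⁻¹ else 0 := by
    intro i j
    have h1 : b i ⬝ᵥ (B *ᵥ u j) = (B *ᵥ b i) ⬝ᵥ u j := helper_dot_symm B hBsymm _ _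
    rw [hBu j, heig i, hortho, smul_dotProduct, smul_eq_mul] at h1
    by_cases hij : i = j
    · simp only [hij, if_true] at h1 ⊢
      exact eq_inv_of_mul_eq_one_right h1.symm
    · simp only [hij, if_false] at h1 ⊢
      exact (mul_eq_zero.mp h1.symm).resolve_left (hβ i)
  have hmm : ∀ i j, m i ⬝ᵥ m j = if i = j then (β i)⁻¹ else 0 :=
    fun i j => (hmm' i j).trans (hbu i j)
  have hβpos : ∀ j, 0 < β j := by
    intro j
    have h0 : (0:ℝ) ≤ m j ⬝ᵥ m j := Finset.sum_nonneg fun i _ => mul_self_nonneg _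
    rw [hmm j j, if_pos rfl] at h0
    have : (0:ℝ) < (β j)⁻¹ := lt_of_le_of_ne h0 (Ne.symm (inv_ne_zero (hβ j)))
    exact inv_pos.mp this
  set s : Fin r → ℝ := fun j => Real.sqrt (m j ⬝ᵥ m j) with hs
  have hs2 : ∀ j, s j * s j = (β j)⁻¹ := by
    intro j
    rw [hs]
    simp only
    rw [Real.mul_self_sqrt (by rw [hmm j j, if_pos rfl]; exact inv_nonneg.mpr (hβpos j).le),
      hmm j j, if_pos rfl]
  have hsne : ∀ j, s j ≠ 0 := by
    intro j hz
    have := hs2 j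
    rw [hz, mul_zero] at this
    exact inv_ne_zero (hβ j) this.symm
  have hss : ∀ j, (s j)⁻¹ * (s j)⁻¹ = β j := by
    intro j
    rw [← mul_inv, hs2, inv_inv]
  -- X^T action on m and c
  have hXtm : ∀ j, Xᵀ *ᵥ m j = b j := by
    intro j
    rw [hmdef j, Matrix.mulVec_mulVec, hXtYt, hYXb]
  have hXtc : ∀ j, Xᵀ *ᵥ c j = (s j)⁻¹ • b j := by
    intro j
    rw [hc j, Matrix.mulVec_smul, hXtm]
  have hcc : ∀ i j, c i ⬝ᵥ c j = if i = j then 1 else 0 := by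
    intro i j
    by_cases hij : i = j
    · subst hij
      rw [hc i, smul_dotProduct, dotProduct_smul, smul_eq_mul, smul_eq_mul, if_pos rfl]
      have hnn : m i ⬝ᵥ m i = (β i)⁻¹ := by rw [hmm, if_pos rfl]
      have hpos : (0:ℝ) < m i ⬝ᵥ m i := hnn ▸ inv_pos.mpr (hβpos i)
      rw [← mul_assoc, ← mul_inv, Real.mul_self_sqrt hpos.le, inv_mul_cancel₀ (ne_of_gt hpos)]
    · rw [hc i, hc j, smul_dotProduct, dotProduct_smul, hmm i j, if_neg hij]
      simp [hij]
  -- the projector P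
  set P : Matrix (Fin p) (Fin p) ℝ := ∑ j : Fin r, vecMulVec (c j) (c j) with hP
  have hPt : Pᵀ = P := by
    rw [hP, Matrix.transpose_sum]
    exact Finset.sum_congr rfl fun j _ => helper_vecMulVec_transpose _ _
  have hPP : P * P = P := by
    rw [hP, Finset.sum_mul]
    have : ∀ i : Fin r, vecMulVec (c i) (c i) * ∑ j : Fin r, vecMulVec (c j) (c j)
        = vecMulVec (c i) (c i) := by
      intro i
      rw [Finset.mul_sum]
      have : ∀ j : Fin r, vecMulVec (c i) (c i) * vecMulVec (c j) (c j)
          = if i = j then vecMulVec (c i) (c j) else 0 := by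
        intro j
        rw [helper_vecMulVec_mul_vecMulVec, hcc]
        by_cases hij : i = j <;> simp [hij]
      simp_rw [this]
      simp
    simp_rw [this]
  have h1P : (1 - P) * (1 - P) = 1 - P := by
    have : (1 - P) * (1 - P) = 1 - P - P + P * P := by noncomm_ring
    rw [this, hPP]; abel
  have h1Pt : (1 - P)ᵀ = 1 - P := by rw [Matrix.transpose_sub, Matrix.transpose_one, hPt]
  -- deflated Gram matrix
  have hXPX : Xᵀ * (P * X) = ∑ j : Fin r, β j • vecMulVec (b j) (b j) := by
    rw [hP, Matrix.sum_mul, Matrix.mul_sum]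
    refine Finset.sum_congr rfl fun j _ => ?_
    rw [helper_vecMulVec_mul, helper_mul_vecMulVec, hXtc, helper_smul_vecMulVec, hss]
  have hX'E : X'ᵀ * X' = Xᵀ * X - ∑ j : Fin r, β j • vecMulVec (b j) (b j) := by
    rw [hX', Matrix.transpose_mul, h1Pt]
    calc Xᵀ * (1 - P) * ((1 - P) * X) = Xᵀ * ((1 - P) * ((1 - P) * X)) := by
          rw [Matrix.mul_assoc]
      _ = Xᵀ * ((1 - P) * (1 - P) * X) := by rw [Matrix.mul_assoc (1 - P)]
      _ = Xᵀ * ((1 - P) * X) := by rw [h1P]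
      _ = Xᵀ * X - Xᵀ * (P * X) := by rw [Matrix.sub_mul, Matrix.one_mul, Matrix.mul_sub]
      _ = Xᵀ * X - ∑ j : Fin r, β j • vecMulVec (b j) (b j) := by rw [hXPX]
  have hsum0 : (∑ j : Fin r, β j • vecMulVec (b j) (b j)) *ᵥ e = 0 := by
    rw [helper_sum_mulVec]
    refine Finset.sum_eq_zero fun j _ => ?_
    rw [Matrix.smul_mulVec, helper_vecMulVec_mulVec, hbe, zero_smul, smul_zero]
  have hd'd : d' = d := by
    rw [hd', hX'E, Matrix.sub_mulVec, hsum0, sub_zero, hd]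
  have h2m : twoM' = twoM := by
    rw [htwoM', ← hd', hd'd, hed]
  refine ⟨h2m, ?_⟩
  rw [hB', h2m, hd'd, hX'E, hB]
  abel
end

section
/- (Brauer's theorem, characteristic polynomial form) Let A be a real n×n matrix, x ∈ ℝ^n a vector with A x = λ x, and v ∈ ℝ^n arbitrary. Then the characteristic polynomials satisfy the identity (t − λ) · charpoly(A + x vᵀ) = (t − (λ + vᵀx)) · charpoly(A), where x vᵀ denotes the outer product. In particular, the eigenvalues of A + x vᵀ are those of A with one copy of λ replaced by λ + vᵀx. -/
open Matrix Polynomial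

/-!
With `M = t • 1 - A` over `R[t]` we have `M x = (t - λ) x`, hence
`M * ((t - λ) • 1 - x vᵀ) = (t - λ) • (M - x vᵀ)`. Taking determinants and using
`det (s • 1 - x vᵀ) = s ^ (n - 1) * (s - vᵀx)` gives
`(t - λ) ^ n * charpoly (A + x vᵀ) = (t - λ) ^ (n - 1) * (t - λ - vᵀx) * charpoly A`,
and the monic factor `(t - λ) ^ (n - 1)` cancels.
-/

namespace Matrix

variable {n R : Type*} [Fintype n] [DecidableEq n] [CommRing R]

theorem det_scalar_sub_vecMulVec (s : R) (u w : n → R) :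
    (scalar n s - vecMulVec u w).det =
      s ^ Fintype.card n - (u ⬝ᵥ w) * s ^ (Fintype.card n - 1) := by
  rw [← eval_charpoly, charpoly_vecMulVec]
  simp

theorem mul_scalar_sub_vecMulVec {M : Matrix n n R} {u : n → R} {s : R}
    (hu : M *ᵥ u = s • u) (w : n → R) :
    M * (scalar n s - vecMulVec u w) = s • (M - vecMulVec u w) := by
  rw [mul_sub, mul_vecMulVec, hu, smul_vecMulVec, smul_sub, scalar_apply, ← smul_one_eq_diagonal,
    Matrix.mul_smul, mul_one]

theorem det_mul_det_scalar_sub_vecMulVec {M : Matrix n n R} {u : n → R} {s : R}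
    (hu : M *ᵥ u = s • u) (w : n → R) :
    M.det * (s ^ Fintype.card n - (u ⬝ᵥ w) * s ^ (Fintype.card n - 1)) =
      s ^ Fintype.card n * (M - vecMulVec u w).det := by
  rw [← det_scalar_sub_vecMulVec, ← det_mul, mul_scalar_sub_vecMulVec hu, det_smul]

theorem charmatrix_add_vecMulVec (A : Matrix n n R) (x v : n → R) :
    charmatrix (A + vecMulVec x v) = charmatrix A - vecMulVec (C ∘ x) (C ∘ v) := by
  ext i j
  simp [charmatrix_apply, vecMulVec_apply, sub_sub]

theorem charmatrix_mulVec_of_mulVec_eq_smul {A : Matrix n n R} {x : n → R} {lam : R}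
    (hx : A *ᵥ x = lam • x) : charmatrix A *ᵥ (C ∘ x) = (X - C lam) • (C ∘ x) := by
  funext i
  rw [charmatrix, sub_mulVec, RingHom.mapMatrix_apply, Pi.sub_apply, ← RingHom.map_mulVec, hx]
  simp only [scalar_apply, mulVec_diagonal, Pi.smul_apply, Function.comp_apply, smul_eq_mul, map_mul]
  ring

theorem X_sub_C_mul_charpoly_add_vecMulVec {A : Matrix n n R} {x : n → R} {lam : R}
    (hx : A *ᵥ x = lam • x) (v : n → R) :
    (X - C lam) * (A + vecMulVec x v).charpoly = (X - C (lam + v ⬝ᵥ x)) * A.charpoly := by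
  cases isEmpty_or_nonempty n
  · simp [charpoly, dotProduct]
  obtain ⟨k, hk⟩ : ∃ k, Fintype.card n = k + 1 := Nat.exists_eq_add_one.mpr Fintype.card_pos
  have hdet := det_mul_det_scalar_sub_vecMulVec (charmatrix_mulVec_of_mulVec_eq_smul hx) (C ∘ v)
  rw [← charmatrix_add_vecMulVec, ← charpoly, ← charpoly, ← RingHom.map_dotProduct, hk,
    Nat.add_sub_cancel] at hdet
  refine ((monic_X_sub_C lam).pow k).isRegular.left ?_
  simp only [C_add, dotProduct_comm v]
  linear_combination -hdet

end Matrix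

/-- Brauer's theorem, characteristic polynomial form: If `A x = λ x` and
`v` is arbitrary, then `(t − λ) · charpoly(A + x vᵀ) = (t − (λ + vᵀx)) · charpoly(A)`. -/
theorem stmt12 {n : ℕ} (A : Matrix (Fin n) (Fin n) ℝ)
    (x v : Fin n → ℝ) (lam : ℝ) (hx : A.mulVec x = lam • x) :
    (Polynomial.X - Polynomial.C lam) * (A + vecMulVec x v).charpoly =
      (Polynomial.X - Polynomial.C (lam + v ⬝ᵥ x)) * A.charpoly :=
  X_sub_C_mul_charpoly_add_vecMulVec hx v
end

section
/- Let D be a real diagonal n×n matrix, v ∈ ℝ^n, ρ ∈ ℝ, and C := D + ρ v vᵀ. Suppose λ is an eigenvalue of C (i.e., C u = λ u for some nonzero u) and λ is not equal to any diagonal entry of D. Then x := (D − λ I)⁻¹ v is nonzero and satisfies C x = λ x; that is, x is an eigenvector of C corresponding to λ. -/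
open Matrix

/-- If `D` is diagonal, `C := D + ρ v vᵀ`, and `λ` is an eigenvalue of `C`
which differs from every diagonal entry of `D`, then `x := (D − λ I)⁻¹ v` is a nonzero
eigenvector of `C` corresponding to `λ`. -/
theorem stmt14 {n : ℕ} (D : Matrix (Fin n) (Fin n) ℝ) (hD : D.IsDiag)
    (v : Fin n → ℝ) (ρ : ℝ)
    (C : Matrix (Fin n) (Fin n) ℝ) (hC : C = D + ρ • vecMulVec v v)
    (lam : ℝ) (hlam : ∃ u : Fin n → ℝ, u ≠ 0 ∧ C.mulVec u = lam • u)
    (hne : ∀ i : Fin n, lam ≠ D i i)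
    (x : Fin n → ℝ)
    (hx : x = (D - lam • (1 : Matrix (Fin n) (Fin n) ℝ))⁻¹.mulVec v) :
    x ≠ 0 ∧ C.mulVec x = lam • x := by
  obtain ⟨u, hu0, hu⟩ := hlam
  set M : Matrix (Fin n) (Fin n) ℝ := D - lam • (1 : Matrix (Fin n) (Fin n) ℝ) with hM
  have hMdiag : M = Matrix.diagonal (fun i => D i i - lam) := by
    ext i j
    by_cases h : i = j
    · subst h; simp [hM, Matrix.one_apply]
    · simp [hM, Matrix.one_apply, h, hD h, Matrix.diagonal_apply_ne _ h]
  have hdet : IsUnit M.det := by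
    rw [hMdiag, Matrix.det_diagonal]
    exact (Finset.prod_ne_zero_iff.mpr fun i _ =>
      sub_ne_zero.mpr fun h => hne i h.symm).isUnit
  have hMinv : ∀ w : Fin n → ℝ, M⁻¹.mulVec (M.mulVec w) = w := fun w => by
    rw [Matrix.mulVec_mulVec, Matrix.nonsing_inv_mul M hdet, Matrix.one_mulVec]
  have hMx : M.mulVec x = v := by
    rw [hx, Matrix.mulVec_mulVec, Matrix.mul_nonsing_inv M hdet, Matrix.one_mulVec]
  have hvv : ∀ w : Fin n → ℝ, (vecMulVec v v).mulVec w = (v ⬝ᵥ w) • v := by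
    intro w
    funext i
    simp [Matrix.mulVec, vecMulVec_apply, dotProduct, Finset.mul_sum, Finset.sum_mul,
      mul_comm, mul_assoc, mul_left_comm]
  -- expand C.mulVec for any w
  have hCw : ∀ w : Fin n → ℝ, C.mulVec w = D.mulVec w + (ρ * (v ⬝ᵥ w)) • v := by
    intro w
    rw [hC, Matrix.add_mulVec, Matrix.smul_mulVec, hvv, smul_smul]
  -- D w = M w + lam • w
  have hDw : ∀ w : Fin n → ℝ, D.mulVec w = M.mulVec w + lam • w := by
    intro w
    rw [hM, Matrix.sub_mulVec, Matrix.smul_mulVec, Matrix.one_mulVec]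
    abel
  -- from eigen equation: M u = -(ρ * (v ⬝ᵥ u)) • v
  have hMu : M.mulVec u = (-(ρ * (v ⬝ᵥ u))) • v := by
    have := hu
    rw [hCw, hDw] at this
    have h2 : M.mulVec u + (ρ * (v ⬝ᵥ u)) • v = 0 := by
      have h := sub_eq_zero_of_eq this
      rw [← h]; abel
    rw [neg_smul, eq_neg_iff_add_eq_zero]
    exact h2
  have hvu : v ⬝ᵥ u ≠ 0 := by
    intro h
    apply hu0
    have : M.mulVec u = 0 := by rw [hMu, h]; simp
    have := congrArg (M⁻¹.mulVec ·) this
    simpa [hMinv u] using this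
  -- u = -(ρ * (v ⬝ᵥ u)) • x
  have hux : u = (-(ρ * (v ⬝ᵥ u))) • x := by
    have := congrArg (M⁻¹.mulVec ·) hMu
    simpa [hMinv u, Matrix.mulVec_smul, Matrix.mulVec_neg, hx, neg_smul] using this
  -- secular equation
  have hsec : ρ * (v ⬝ᵥ x) = -1 := by
    have h1 : v ⬝ᵥ u = (-(ρ * (v ⬝ᵥ u))) * (v ⬝ᵥ x) := by
      conv_lhs => rw [hux]
      simp [dotProduct_smul]
    exact mul_left_cancel₀ hvu (show (v ⬝ᵥ u) * (ρ * (v ⬝ᵥ x)) = (v ⬝ᵥ u) * (-1) by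
      linear_combination h1)
  have hx0 : x ≠ 0 := by
    intro h
    apply hvu
    have hv0 : v = 0 := by rw [← hMx, h, Matrix.mulVec_zero]
    simp [hv0]
  refine ⟨hx0, ?_⟩
  rw [hCw, hDw, hMx, hsec]
  simp only [neg_one_smul]
  abel
end

section
/- (Interlacing for a negative rank-one update) Let D be a real diagonal n×n matrix whose diagonal entries listed in nondecreasing order are d_1 ≤ d_2 ≤ ... ≤ d_n. Let v ∈ ℝ^n with ‖v‖₂ = 1, let ρ < 0, and set C := D + ρ v vᵀ. If μ_1 ≤ μ_2 ≤ ... ≤ μ_n are the eigenvalues of C listed in nondecreasing order with multiplicity (i.e., the characteristic polynomial of C equals ∏_{i=1}^{n} (t − μ_i)), then μ_1 ≤ d_1 ≤ μ_2 ≤ d_2 ≤ ... ≤ μ_n ≤ d_n; that is, μ_i ≤ d_i for all i and d_i ≤ μ_{i+1} for all i < n. -/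
open Matrix Polynomial

/-!
`C = D + ρ v vᵀ` lies below `D` in the Loewner order, and agrees with `D` as a quadratic form on
the hyperplane `v^⊥`. By the Courant–Fischer principle, applied to coordinate subspaces of the
eigenbasis of `D`, the first fact gives `#{i | d i ≤ t} ≤ #{i | μ i ≤ t}` and the second
`#{i | t ≤ d i} ≤ #{i | t ≤ μ i} + 1` for every `t`. For sorted lists, these counting inequalities
at `t = d i` are exactly `μ i ≤ d i` and `d i ≤ μ (i + 1)`.
-/

open Module Finset Submodule
open scoped RealInnerProductSpace

namespace OrthonormalBasis

variable {ι E : Type*} [Fintype ι] [NormedAddCommGroup E] [InnerProductSpace ℝ E]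
  (b : OrthonormalBasis ι ℝ E)

theorem finrank_span_image (s : Finset ι) : finrank ℝ (span ℝ (b '' s)) = #s := by
  rw [← Subtype.range_coe (s := (s : Set ι)), ← Set.range_comp, finrank_span_eq_card
    (b.orthonormal.linearIndependent.comp _ Subtype.val_injective)]
  simp

theorem inner_eq_zero_of_mem_span_image {s : Set ι} {x : E} (hx : x ∈ span ℝ (b '' s))
    {i : ι} (hi : i ∉ s) : ⟪b i, x⟫ = 0 := by
  suffices span ℝ (b '' s) ≤ (ℝ ∙ b i)ᗮ from mem_orthogonal_singleton_iff_inner_right.mp (this hx)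
  rw [span_le]
  rintro _ ⟨j, hj, rfl⟩
  exact mem_orthogonal_singleton_iff_inner_right.mpr
    (b.orthonormal.inner_eq_zero (by rintro rfl; exact hi hj))

variable {b} {T : E →ₗ[ℝ] E} {ev : ι → ℝ}

theorem inner_map_self_sub_mul_norm_sq (hT : ∀ i, T (b i) = ev i • b i) (x : E) (t : ℝ) :
    ⟪T x, x⟫ - t * ‖x‖ ^ 2 = ∑ i, (ev i - t) * ⟪b i, x⟫ ^ 2 := by
  have hTx : T x = ∑ i, (ev i * ⟪b i, x⟫) • b i := by
    conv_lhs => rw [← b.sum_repr' x]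
    simp [map_sum, hT, smul_smul, mul_comm]
  rw [hTx, sum_inner, ← b.sum_sq_inner_right x, mul_sum, ← sum_sub_distrib]
  refine sum_congr rfl fun i _ => ?_
  rw [real_inner_smul_left]
  ring

theorem inner_map_self_le_of_mem_span (hT : ∀ i, T (b i) = ev i • b i) {t : ℝ} {x : E}
    (hx : x ∈ span ℝ (b '' ↑({i | ev i ≤ t} : Finset ι))) : ⟪T x, x⟫ ≤ t * ‖x‖ ^ 2 := by
  have hterm (i : ι) (_ : i ∈ univ) : (ev i - t) * ⟪b i, x⟫ ^ 2 ≤ 0 := by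
    by_cases hi : ev i ≤ t
    · exact mul_nonpos_of_nonpos_of_nonneg (sub_nonpos.mpr hi) (sq_nonneg _)
    · simp [b.inner_eq_zero_of_mem_span_image hx (by simpa using hi)]
  linarith [inner_map_self_sub_mul_norm_sq hT x t, sum_nonpos hterm]

theorem le_inner_map_self_of_mem_span (hT : ∀ i, T (b i) = ev i • b i) {t : ℝ} {x : E}
    (hx : x ∈ span ℝ (b '' ↑({i | t ≤ ev i} : Finset ι))) : t * ‖x‖ ^ 2 ≤ ⟪T x, x⟫ := by
  simpa using inner_map_self_le_of_mem_span (b := b) (T := -T) (ev := -ev) (t := -t)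
    (fun i => by simp [hT]) (x := x) (by simpa using hx)

theorem eq_zero_of_mem_span_of_inner_map_self_le (hT : ∀ i, T (b i) = ev i • b i) {t : ℝ}
    {x : E} (hx : x ∈ span ℝ (b '' ↑({i | t < ev i} : Finset ι)))
    (hxT : ⟪T x, x⟫ ≤ t * ‖x‖ ^ 2) : x = 0 := by
  have hout (i : ι) (hi : ¬t < ev i) : ⟪b i, x⟫ = 0 :=
    b.inner_eq_zero_of_mem_span_image hx (by simpa using hi)
  have hterm (i : ι) (_ : i ∈ univ) : 0 ≤ (ev i - t) * ⟪b i, x⟫ ^ 2 := by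
    by_cases hi : t < ev i
    · exact mul_nonneg (sub_nonneg.mpr hi.le) (sq_nonneg _)
    · simp [hout i hi]
  have hsum : ∑ i, (ev i - t) * ⟪b i, x⟫ ^ 2 = 0 :=
    le_antisymm (by linarith [inner_map_self_sub_mul_norm_sq hT x t]) (sum_nonneg hterm)
  have hcoord (i : ι) : ⟪b i, x⟫ = 0 := by
    by_cases hi : t < ev i
    · simpa [(sub_pos.mpr hi).ne'] using (sum_eq_zero_iff_of_nonneg hterm).mp hsum i (mem_univ i)
    · exact hout i hi
  calc x = ∑ i, ⟪b i, x⟫ • b i := (b.sum_repr' x).symm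
    _ = 0 := by simp [hcoord]

-- Courant–Fischer, in counting form.
theorem finrank_le_card_filter_le (hT : ∀ i, T (b i) = ev i • b i) {V : Submodule ℝ E}
    {t : ℝ} (hV : ∀ x ∈ V, ⟪T x, x⟫ ≤ t * ‖x‖ ^ 2) : finrank ℝ V ≤ #{i | ev i ≤ t} := by
  have : FiniteDimensional ℝ E := .of_basis b.toBasis
  set W := span ℝ (b '' ↑({i | t < ev i} : Finset ι))
  have hdisj : V ⊓ W = ⊥ := eq_bot_iff.mpr fun x ⟨hxV, hxW⟩ =>
    (mem_bot ℝ).mpr (eq_zero_of_mem_span_of_inner_map_self_le hT hxW (hV x hxV))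
  have hdim := finrank_sup_add_finrank_inf_eq V W
  rw [hdisj, finrank_bot, b.finrank_span_image] at hdim
  have hsup := (V ⊔ W).finrank_le
  rw [finrank_eq_card_basis b.toBasis] at hsup
  have hsplit := card_filter_add_card_filter_not (s := univ) (fun i => ev i ≤ t)
  simp only [not_le, card_univ] at hsplit
  omega

theorem finrank_le_card_filter_ge (hT : ∀ i, T (b i) = ev i • b i) {V : Submodule ℝ E}
    {t : ℝ} (hV : ∀ x ∈ V, t * ‖x‖ ^ 2 ≤ ⟪T x, x⟫) : finrank ℝ V ≤ #{i | t ≤ ev i} := by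
  simpa using finrank_le_card_filter_le (b := b) (T := -T) (ev := -ev) (t := -t)
    (fun i => by simp [hT]) (V := V) (fun x hx => by simpa using hV x hx)

end OrthonormalBasis

theorem Submodule.finrank_le_finrank_inf_orthogonal_span_singleton_add_one {𝕜 E : Type*}
    [RCLike 𝕜] [NormedAddCommGroup E] [InnerProductSpace 𝕜 E] [FiniteDimensional 𝕜 E]
    (V : Submodule 𝕜 E) (v : E) : finrank 𝕜 V ≤ finrank 𝕜 ↥(V ⊓ (𝕜 ∙ v)ᗮ) + 1 := by
  have hdim := finrank_sup_add_finrank_inf_eq V (𝕜 ∙ v)ᗮ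
  have hsup := (V ⊔ (𝕜 ∙ v)ᗮ).finrank_le
  have hperp := (𝕜 ∙ v).finrank_add_finrank_orthogonal
  have hline : finrank 𝕜 (𝕜 ∙ v) ≤ 1 := by
    simpa using finrank_span_le_card (R := 𝕜) ({v} : Set E)
  omega

theorem Polynomial.card_filter_eq_of_prod_X_sub_C_eq {R ι : Type*} [CommRing R] [IsDomain R]
    [Fintype ι] {f g : ι → R} (h : ∏ i, (X - C (f i)) = ∏ i, (X - C (g i))) (p : R → Prop)
    [DecidablePred p] : #{i | p (f i)} = #{i | p (g i)} := by
  have hroots := congrArg roots h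
  rw [roots_prod _ _ (prod_ne_zero_iff.mpr fun i _ => X_sub_C_ne_zero _),
    roots_prod _ _ (prod_ne_zero_iff.mpr fun i _ => X_sub_C_ne_zero _)] at hroots
  simp only [roots_X_sub_C, Multiset.bind_singleton] at hroots
  have hcount := congrArg (Multiset.countP p) hroots
  rwa [Multiset.countP_map, Multiset.countP_map] at hcount

namespace Monotone

variable {α : Type*} [LinearOrder α] {n : ℕ} {f : Fin n → α}

theorem apply_le_iff_lt_card_filter_le (hf : Monotone f) {k : Fin n} {t : α} :
    f k ≤ t ↔ (k : ℕ) < #{i | f i ≤ t} := by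
  constructor
  · intro hk
    calc (k : ℕ) < #(Iic k) := by simp
      _ ≤ #{i | f i ≤ t} := card_le_card fun i hi => by
          simp only [mem_Iic, mem_filter, mem_univ, true_and] at hi ⊢; exact (hf hi).trans hk
  · intro hk
    by_contra! hlt
    have hsub : ({i | f i ≤ t} : Finset (Fin n)) ⊆ Iio k := fun i hi => by
      simp only [mem_Iio, mem_filter, mem_univ, true_and] at hi ⊢
      by_contra! hki
      exact (hlt.trans_le (hf hki)).not_ge hi
    have := card_le_card hsub
    simp at this
    omega

theorem le_apply_iff_le_add_card_filter_le (hf : Monotone f) {k : Fin n} {t : α} :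
    t ≤ f k ↔ n ≤ k + #{i | t ≤ f i} := by
  constructor
  · intro hk
    calc n = k + #(Ici k) := by simp
      _ ≤ k + #{i | t ≤ f i} := Nat.add_le_add_left (card_le_card fun i hi => by
          simp only [mem_Ici, mem_filter, mem_univ, true_and] at hi ⊢; exact hk.trans (hf hi)) _
  · intro hk
    by_contra! hlt
    have hsub : ({i | t ≤ f i} : Finset (Fin n)) ⊆ Ioi k := fun i hi => by
      simp only [mem_Ioi, mem_filter, mem_univ, true_and] at hi ⊢
      by_contra! hki
      exact ((hf hki).trans_lt hlt).not_ge hi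
    have := card_le_card hsub
    simp at this
    omega

end Monotone

theorem Matrix.IsHermitian.toEuclideanLin_eigenvectorBasis {𝕜 m : Type*} [RCLike 𝕜] [Fintype m]
    [DecidableEq m] {A : Matrix m m 𝕜} (hA : A.IsHermitian) (i : m) :
    toEuclideanLin A (hA.eigenvectorBasis i) = hA.eigenvalues i • hA.eigenvectorBasis i := by
  ext j
  simpa [toLpLin_apply] using congrFun (hA.mulVec_eigenvectorBasis i) j

section RankOneUpdate

variable {m : Type*} [Fintype m] [DecidableEq m]

theorem Matrix.toEuclideanLin_diagonal_basisFun (d : m → ℝ) (j : m) :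
    toEuclideanLin (diagonal d) (EuclideanSpace.basisFun m ℝ j) =
      d j • EuclideanSpace.basisFun m ℝ j := by
  ext i
  by_cases h : i = j <;> simp [toLpLin_apply, h]

theorem Matrix.inner_toEuclideanLin_add_smul_vecMulVec (A : Matrix m m ℝ) (v : m → ℝ) (ρ : ℝ)
    (x : EuclideanSpace ℝ m) :
    ⟪toEuclideanLin (A + ρ • vecMulVec v v) x, x⟫ =
      ⟪toEuclideanLin A x, x⟫ + ρ * ⟪WithLp.toLp 2 v, x⟫ ^ 2 := by
  simp only [map_add, map_smul, LinearMap.add_apply, LinearMap.smul_apply, inner_add_left,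
    toLpLin_apply, EuclideanSpace.inner_eq_star_dotProduct, star_trivial, vecMulVec_mulVec,
    WithLp.ofLp_smul, op_smul_eq_smul, dotProduct_smul, smul_eq_mul]
  rw [dotProduct_comm _ v]
  ring

variable {d v : m → ℝ} {ρ : ℝ} {b : OrthonormalBasis m ℝ (EuclideanSpace ℝ m)} {ev : m → ℝ}

theorem card_filter_le_le_card_filter_le_of_nonpos
    (hb : ∀ i, toEuclideanLin (diagonal d + ρ • vecMulVec v v) (b i) = ev i • b i)
    (hρ : ρ ≤ 0) (t : ℝ) : #{j | d j ≤ t} ≤ #{i | ev i ≤ t} := by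
  set e := EuclideanSpace.basisFun m ℝ
  rw [← e.finrank_span_image]
  refine OrthonormalBasis.finrank_le_card_filter_le hb fun x hx => ?_
  rw [inner_toEuclideanLin_add_smul_vecMulVec]
  have hD := e.inner_map_self_le_of_mem_span (toEuclideanLin_diagonal_basisFun d) hx
  nlinarith [mul_nonpos_of_nonpos_of_nonneg hρ (sq_nonneg ⟪WithLp.toLp 2 v, x⟫)]

theorem card_filter_ge_le_card_filter_ge_add_one
    (hb : ∀ i, toEuclideanLin (diagonal d + ρ • vecMulVec v v) (b i) = ev i • b i) (t : ℝ) :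
    #{j | t ≤ d j} ≤ #{i | t ≤ ev i} + 1 := by
  set e := EuclideanSpace.basisFun m ℝ
  set V := span ℝ (e '' ↑({j | t ≤ d j} : Finset m))
  calc #{j | t ≤ d j} = finrank ℝ V := (e.finrank_span_image _).symm
    _ ≤ finrank ℝ ↥(V ⊓ (ℝ ∙ WithLp.toLp 2 v)ᗮ) + 1 :=
      V.finrank_le_finrank_inf_orthogonal_span_singleton_add_one _
    _ ≤ #{i | t ≤ ev i} + 1 := by
      gcongr
      refine OrthonormalBasis.finrank_le_card_filter_ge hb fun x ⟨hxV, hxv⟩ => ?_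
      rw [inner_toEuclideanLin_add_smul_vecMulVec,
        mem_orthogonal_singleton_iff_inner_right.mp hxv]
      simpa using e.le_inner_map_self_of_mem_span (toEuclideanLin_diagonal_basisFun d) hxV

end RankOneUpdate

theorem stmt15_general {n : ℕ} (d : Fin n → ℝ) (hd : Monotone d)
    (D : Matrix (Fin n) (Fin n) ℝ) (hD : D = Matrix.diagonal d)
    (v : Fin n → ℝ)
    (ρ : ℝ) (hρ : ρ < 0)
    (C : Matrix (Fin n) (Fin n) ℝ) (hC : C = D + ρ • vecMulVec v v)
    (μ : Fin n → ℝ) (hμmono : Monotone μ)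
    (hμ : C.charpoly = ∏ i : Fin n, (Polynomial.X - Polynomial.C (μ i))) :
    (∀ i : Fin n, μ i ≤ d i) ∧
      (∀ i : Fin n, ∀ h : (i : ℕ) + 1 < n, d i ≤ μ ⟨(i : ℕ) + 1, h⟩) := by
  subst hD hC
  have hherm : (diagonal d + ρ • vecMulVec v v).IsHermitian :=
    (isHermitian_diagonal d).add (IsHermitian.smul (by simp [IsHermitian]) (IsSelfAdjoint.all ρ))
  have hb := hherm.toEuclideanLin_eigenvectorBasis
  have hcount (p : ℝ → Prop) [DecidablePred p] : #{i | p (μ i)} = #{i | p (hherm.eigenvalues i)} :=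
    card_filter_eq_of_prod_X_sub_C_eq (hμ.symm.trans (by simpa using hherm.charpoly_eq)) p
  refine ⟨fun k => ?_, fun k hk => ?_⟩
  · rw [hμmono.apply_le_iff_lt_card_filter_le, hcount (· ≤ d k)]
    exact (hd.apply_le_iff_lt_card_filter_le.mp le_rfl).trans_le
      (card_filter_le_le_card_filter_le_of_nonpos hb hρ.le _)
  · rw [hμmono.le_apply_iff_le_add_card_filter_le, hcount (d k ≤ ·), Fin.val_mk]
    have hdk := hd.le_apply_iff_le_add_card_filter_le.mp (le_refl (d k))
    have hrankOne := card_filter_ge_le_card_filter_ge_add_one hb (d k)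
    omega

/-- Interlacing for a negative rank-one update: Let `D = diagonal d` with
`d` nondecreasing, `‖v‖₂ = 1`, `ρ < 0`, and `C := D + ρ v vᵀ`. If `μ_1 ≤ ... ≤ μ_n` are
the eigenvalues of `C` listed in nondecreasing order with multiplicity (i.e. the
characteristic polynomial of `C` is `∏ (t − μ_i)`), then `μ_i ≤ d_i` for all `i` and
`d_i ≤ μ_{i+1}` for all `i < n`. -/
theorem stmt15 {n : ℕ} (d : Fin n → ℝ) (hd : Monotone d)
    (D : Matrix (Fin n) (Fin n) ℝ) (hD : D = Matrix.diagonal d)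
    (v : Fin n → ℝ) (hv : Real.sqrt (v ⬝ᵥ v) = 1)
    (ρ : ℝ) (hρ : ρ < 0)
    (C : Matrix (Fin n) (Fin n) ℝ) (hC : C = D + ρ • vecMulVec v v)
    (μ : Fin n → ℝ) (hμmono : Monotone μ)
    (hμ : C.charpoly = ∏ i : Fin n, (Polynomial.X - Polynomial.C (μ i))) :
    (∀ i : Fin n, μ i ≤ d i) ∧
      (∀ i : Fin n, ∀ h : (i : ℕ) + 1 < n, d i ≤ μ ⟨(i : ℕ) + 1, h⟩) :=
  stmt15_general d hd D hD v ρ hρ C hC μ hμmono hμ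
end

section
/- Suppose the rank of X is k. Then the symmetric matrix B has at least k − 1 positive eigenvalues counted with multiplicity; equivalently, there exists a subspace W of ℝ^n with dim W ≥ k − 1 such that wᵀ B w > 0 for every nonzero w ∈ W. -/
open Matrix

/-- If `rank X = k`, then the symmetric matrix `B` has at least `k − 1`
positive eigenvalues counted with multiplicity; equivalently, there is a subspace `W` of
`ℝⁿ` with `dim W ≥ k − 1` on which the quadratic form of `B` is positive definite. -/
theorem stmt16 {p n k : ℕ} (X : Matrix (Fin p) (Fin n) ℝ)
    (e : Fin n → ℝ) (he : e = fun _ => (1 : ℝ))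
    (d : Fin n → ℝ) (hd : d = (Xᵀ * X).mulVec e)
    (twoM : ℝ) (htwoM : twoM = e ⬝ᵥ (Xᵀ * X).mulVec e) (hm : twoM ≠ 0)
    (B : Matrix (Fin n) (Fin n) ℝ)
    (hB : B = Xᵀ * X - twoM⁻¹ • vecMulVec d d)
    (hrank : X.rank = k) :
    ∃ W : Submodule ℝ (Fin n → ℝ), k - 1 ≤ Module.finrank ℝ W ∧
      ∀ w ∈ W, w ≠ 0 → 0 < w ⬝ᵥ B.mulVec w := by
  classical
  set L : (Fin n → ℝ) →ₗ[ℝ] (Fin p → ℝ) := X.mulVecLin with hL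
  -- a complement of the kernel of L
  obtain ⟨C, hC⟩ := (LinearMap.ker L).exists_isCompl
  -- the functional w ↦ (X e) ⬝ (X w)
  let f : (Fin n → ℝ) →ₗ[ℝ] ℝ :=
    { toFun := fun w => X.mulVec e ⬝ᵥ X.mulVec w
      map_add' := by intro a b; simp [Matrix.mulVec_add, dotProduct_add]
      map_smul' := by intro c a; simp [Matrix.mulVec_smul, dotProduct_smul] }
  refine ⟨C ⊓ LinearMap.ker f, ?_, ?_⟩
  · -- dimension bound
    have hCk : Module.finrank ℝ C = k := by
      have h1 := Submodule.finrank_add_eq_of_isCompl hC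
      have h2 := LinearMap.finrank_range_add_finrank_ker L
      have hr : Module.finrank ℝ (LinearMap.range L) = k := hrank
      omega
    have hsum := Submodule.finrank_sup_add_finrank_inf_eq C (LinearMap.ker f)
    have hkerf : n ≤ Module.finrank ℝ (LinearMap.ker f) + 1 := by
      have h3 := LinearMap.finrank_range_add_finrank_ker f
      have h4 : Module.finrank ℝ (LinearMap.range f) ≤ 1 := by
        simpa using Submodule.finrank_le (LinearMap.range f)
      have h5 : Module.finrank ℝ (Fin n → ℝ) = n := by simp
      omega
    have hsup : Module.finrank ℝ (C ⊔ LinearMap.ker f : Submodule ℝ (Fin n → ℝ)) ≤ n := by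
      have := Submodule.finrank_le (C ⊔ LinearMap.ker f)
      simpa using this
    omega
  · intro w hw hw0
    obtain ⟨hwC, hwf⟩ := hw
    have hwf' : X.mulVec e ⬝ᵥ X.mulVec w = 0 := hwf
    -- X w ≠ 0 since w ∈ C and w ≠ 0
    have hXw : X.mulVec w ≠ 0 := by
      intro h
      have : w ∈ LinearMap.ker L ⊓ C := ⟨h, hwC⟩
      rw [hC.inf_eq_bot] at this
      exact hw0 this
    have hdw : d ⬝ᵥ w = 0 := by
      rw [hd, ← Matrix.mulVec_mulVec, dotProduct_comm,
        Matrix.dotProduct_mulVec, Matrix.vecMul_transpose, dotProduct_comm]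
      exact hwf'
    have hquad : w ⬝ᵥ B.mulVec w = X.mulVec w ⬝ᵥ X.mulVec w := by
      rw [hB, Matrix.sub_mulVec, dotProduct_sub, Matrix.smul_mulVec,
        dotProduct_smul]
      have h1 : w ⬝ᵥ (Xᵀ * X).mulVec w = X.mulVec w ⬝ᵥ X.mulVec w := by
        rw [← Matrix.mulVec_mulVec, Matrix.dotProduct_mulVec, Matrix.vecMul_transpose]
      have h2 : w ⬝ᵥ (vecMulVec d d).mulVec w = 0 := by
        have : (vecMulVec d d).mulVec w = (d ⬝ᵥ w) • d := by
          ext i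
          simp [Matrix.mulVec, Matrix.vecMulVec_apply, dotProduct, Finset.mul_sum,
            mul_comm, mul_assoc, mul_left_comm]
        rw [this, hdw, zero_smul, dotProduct_zero]
      rw [h1, h2]
      simp
    rw [hquad]
    have h0 : (0:ℝ) ≤ X.mulVec w ⬝ᵥ X.mulVec w := Finset.sum_nonneg fun i _ => mul_self_nonneg _
    rcases h0.lt_or_eq with h | h
    · exact h
    · exact absurd (dotProduct_self_eq_zero.mp h.symm) hXw
end
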